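/- The set of cyclic flats of a q-matroid forms a lattice under inclusion, with meet F_1 ∧ F_2 = cyc(F_1 ∩ F_2) and join F_1 ∨ F_2 = cl(F_1 + F_2). -/

import Mathlib

/-!
The meet `cyc (F₁ ∩ F₂)` is flat because an intersection of flats is flat and `cyc` of a flat is
flat (a line not raising the rank of `cyc F` lies in `F`, and adjoining it keeps `cyc F` cyclic);
the join `cl (F₁ + F₂)` is cyclic because sums of cyclic spaces are cyclic and `cl` preserves
cyclicity. The extremal properties hold since `cyc A` is the largest cyclic subspace of `A` and
`cl A` lies in every flat containing `A`, both consequences of submodularity of the rank.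
-/

open Module Submodule

variable {K E : Type*} [Field K] [Fintype K] [AddCommGroup E] [Module K E]
  [FiniteDimensional K E]

/-- The dimension of a subspace, as an integer. -/
noncomputable def dimz {K E : Type*} [Field K] [AddCommGroup E] [Module K E]
    (A : Submodule K E) : ℤ :=
  (Module.finrank K ↥A : ℤ)

/-- `r` is the rank function of a `q`-matroid on `E`: axioms (R1)-(R3). -/
def QMat {K E : Type*} [Field K] [AddCommGroup E] [Module K E]
    (r : Submodule K E → ℤ) : Prop :=
  (∀ A : Submodule K E, 0 ≤ r A ∧ r A ≤ dimz A) ∧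
  (∀ A B : Submodule K E, A ≤ B → r A ≤ r B) ∧
  (∀ A B : Submodule K E, r (A ⊔ B) + r (A ⊓ B) ≤ r A + r B)

/-- A subspace is cyclic: every codimension-1 subspace has the same rank. -/
def QCyclic {K E : Type*} [Field K] [AddCommGroup E] [Module K E]
    (r : Submodule K E → ℤ) (A : Submodule K E) : Prop :=
  ∀ B ≤ A, Module.finrank K ↥A = Module.finrank K ↥B + 1 → r B = r A

/-- The cyclic operator: sum of all one-dimensional `x ≤ A` with
`r (B ⊔ x) = r B` for all codimension-1 subspaces `B` of `A`. -/
noncomputable def qcyc {K E : Type*} [Field K] [AddCommGroup E] [Module K E]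
    (r : Submodule K E → ℤ) (A : Submodule K E) : Submodule K E :=
  sSup {x : Submodule K E | x ≤ A ∧ Module.finrank K ↥x = 1 ∧
    ∀ B ≤ A, Module.finrank K ↥A = Module.finrank K ↥B + 1 → r (B ⊔ x) = r B}

/-- The closure operator: sum of all one-dimensional `x` with `r (A ⊔ x) = r A`. -/
noncomputable def qcl {K E : Type*} [Field K] [AddCommGroup E] [Module K E]
    (r : Submodule K E → ℤ) (A : Submodule K E) : Submodule K E :=
  sSup {x : Submodule K E | Module.finrank K ↥x = 1 ∧ r (A ⊔ x) = r A}

/-- A subspace `F` is a flat: adding any one-dimensional space outside `F`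
increases the rank. -/
def QFlat {K E : Type*} [Field K] [AddCommGroup E] [Module K E]
    (r : Submodule K E → ℤ) (F : Submodule K E) : Prop :=
  ∀ x : Submodule K E, Module.finrank K ↥x = 1 → ¬ x ≤ F → r F < r (F ⊔ x)

section Rank

variable {K E : Type*} [Field K] [AddCommGroup E] [Module K E]
  {r : Submodule K E → ℤ}

theorem QMat.rank_mono (hM : QMat r) {A B : Submodule K E} (h : A ≤ B) : r A ≤ r B :=
  hM.2.1 A B h

theorem QMat.rank_sup_add_rank_inf_le (hM : QMat r) (A B : Submodule K E) :
    r (A ⊔ B) + r (A ⊓ B) ≤ r A + r B :=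
  hM.2.2 A B

theorem QMat.rank_sup_le_add_one (hM : QMat r) (A : Submodule K E) {x : Submodule K E}
    (hx : finrank K x = 1) : r (A ⊔ x) ≤ r A + 1 := by
  have hrx : r x ≤ 1 := by simpa [dimz, hx] using (hM.1 x).2
  linarith [hM.rank_sup_add_rank_inf_le A x, (hM.1 (A ⊓ x)).1]

theorem QMat.rank_sup_le_of_rank_sup_eq (hM : QMat r) {A F x : Submodule K E} (hAF : A ≤ F)
    (h : r (A ⊔ x) = r A) : r (F ⊔ x) ≤ r F := by
  have hsub := hM.rank_sup_add_rank_inf_le F (A ⊔ x)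
  rw [← sup_assoc, sup_eq_left.mpr hAF] at hsub
  linarith [hM.rank_mono (le_inf hAF le_sup_left : A ≤ F ⊓ (A ⊔ x))]

theorem QMat.qflat_iff (hM : QMat r) {F : Submodule K E} :
    QFlat r F ↔ ∀ x : Submodule K E, finrank K x = 1 → r (F ⊔ x) = r F → x ≤ F := by
  refine ⟨fun hF x hx hr => not_not.mp fun hxF => (hF x hx hxF).ne' hr, fun hF x hx hxF => ?_⟩
  exact (hM.rank_mono le_sup_left).lt_of_ne fun hr => hxF (hF x hx hr.symm)

theorem QFlat.inf (hM : QMat r) {F₁ F₂ : Submodule K E} (h₁ : QFlat r F₁)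
    (h₂ : QFlat r F₂) : QFlat r (F₁ ⊓ F₂) := by
  refine hM.qflat_iff.mpr fun x hx hr => le_inf ?_ ?_
  · refine hM.qflat_iff.mp h₁ x hx (le_antisymm ?_ (hM.rank_mono le_sup_left))
    exact hM.rank_sup_le_of_rank_sup_eq inf_le_left hr
  · refine hM.qflat_iff.mp h₂ x hx (le_antisymm ?_ (hM.rank_mono le_sup_left))
    exact hM.rank_sup_le_of_rank_sup_eq inf_le_right hr

theorem le_sSup_of_forall_span_singleton_mem {A : Submodule K E} {S : Set (Submodule K E)}
    (h : ∀ a ∈ A, a ≠ 0 → span K {a} ∈ S) : A ≤ sSup S := by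
  intro a ha
  by_cases h0 : a = 0
  · simp [h0]
  · exact le_sSup (h a ha h0) (mem_span_singleton_self a)

theorem le_qcl (r : Submodule K E → ℤ) (A : Submodule K E) : A ≤ qcl r A :=
  le_sSup_of_forall_span_singleton_mem fun a ha h0 =>
    ⟨finrank_span_singleton h0, by rw [sup_eq_left.mpr ((span_singleton_le_iff_mem a A).2 ha)]⟩

theorem qcyc_le (r : Submodule K E → ℤ) (A : Submodule K E) : qcyc r A ≤ A :=
  sSup_le fun _ hx => hx.1

theorem QMat.qcl_le_of_qflat (hM : QMat r) {A F : Submodule K E} (hAF : A ≤ F)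
    (hF : QFlat r F) : qcl r A ≤ F :=
  sSup_le fun x ⟨hx, hr⟩ => hM.qflat_iff.mp hF x hx
    (le_antisymm (hM.rank_sup_le_of_rank_sup_eq hAF hr) (hM.rank_mono le_sup_left))

theorem exists_line_le_not_le {A B : Submodule K E} (h : B < A) :
    ∃ y : Submodule K E, finrank K y = 1 ∧ y ≤ A ∧ ¬ y ≤ B := by
  obtain ⟨a, haA, haB⟩ := SetLike.exists_of_lt h
  have ha0 : a ≠ 0 := fun h0 => haB (h0 ▸ B.zero_mem)
  exact ⟨span K {a}, finrank_span_singleton ha0, (span_singleton_le_iff_mem a A).2 haA,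
    fun hle => haB (hle (mem_span_singleton_self a))⟩

end Rank

section FiniteDimensional

variable {K E : Type*} [Field K] [AddCommGroup E] [Module K E] [FiniteDimensional K E]
  {r : Submodule K E → ℤ}

theorem finrank_sup_eq_add_one_of_not_le {B x : Submodule K E} (hx : finrank K x = 1)
    (hxB : ¬ x ≤ B) : finrank K ↥(B ⊔ x) = finrank K B + 1 := by
  have hlt : B ⊓ x < x := inf_le_right.lt_of_ne fun h => hxB (h ▸ inf_le_left)
  have := finrank_lt_finrank_of_lt hlt
  have := finrank_sup_add_finrank_inf_eq B x
  omega

theorem sup_eq_of_finrank_eq_add_one {A B x : Submodule K E} (hBA : B ≤ A)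
    (hd : finrank K A = finrank K B + 1) (hxA : x ≤ A) (hx : finrank K x = 1)
    (hxB : ¬ x ≤ B) : B ⊔ x = A :=
  eq_of_le_of_finrank_le (sup_le hBA hxA) (by rw [finrank_sup_eq_add_one_of_not_le hx hxB]; omega)

/-- `B ⊔ C = D` and `B ⊓ C` is a hyperplane of `C`, so submodularity gives `r D ≤ r B`. -/
theorem QCyclic.rank_eq_of_not_le (hM : QMat r) {B C D : Submodule K E} (hC : QCyclic r C)
    (hBD : B ≤ D) (hCD : C ≤ D) (hd : finrank K D = finrank K B + 1) (hCB : ¬ C ≤ B) :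
    r B = r D := by
  have hsup : B ⊔ C = D := by
    refine eq_of_le_of_finrank_le (sup_le hBD hCD) ?_
    have := finrank_lt_finrank_of_lt (le_sup_left.lt_of_ne fun h => hCB (h ▸ le_sup_right) :
      B < B ⊔ C)
    omega
  have hdim := finrank_sup_add_finrank_inf_eq B C
  rw [hsup, inf_comm] at hdim
  have hrinf : r (C ⊓ B) = r C := hC (C ⊓ B) inf_le_left (by omega)
  have hsub := hM.rank_sup_add_rank_inf_le B C
  rw [hsup, inf_comm, hrinf] at hsub
  linarith [hM.rank_mono hBD]

theorem QCyclic.sup (hM : QMat r) {C₁ C₂ : Submodule K E} (h₁ : QCyclic r C₁)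
    (h₂ : QCyclic r C₂) : QCyclic r (C₁ ⊔ C₂) := by
  intro B hB hd
  by_cases hC₁ : C₁ ≤ B
  · have hC₂ : ¬ C₂ ≤ B := fun hC₂ => by
      have := finrank_mono (sup_le hC₁ hC₂)
      omega
    exact h₂.rank_eq_of_not_le hM hB le_sup_right hd hC₂
  · exact h₁.rank_eq_of_not_le hM hB le_sup_left hd hC₁

theorem QCyclic.sup_line (hM : QMat r) {C x : Submodule K E} (hC : QCyclic r C)
    (hx : finrank K x = 1) (hr : r (C ⊔ x) = r C) : QCyclic r (C ⊔ x) := by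
  by_cases hxC : x ≤ C
  · rwa [sup_eq_left.mpr hxC]
  intro B hB hd
  by_cases hCB : C ≤ B
  · have hBC : C = B := eq_of_le_of_finrank_le hCB (by
      rw [finrank_sup_eq_add_one_of_not_le hx hxC] at hd; omega)
    rw [← hBC, hr]
  · exact hC.rank_eq_of_not_le hM hB le_sup_left hd hCB

theorem QMat.rank_qcl (hM : QMat r) (A : Submodule K E) : r (qcl r A) = r A := by
  obtain ⟨M, hMmax⟩ :=
    exists_maximal_of_wellFoundedGT (fun M => A ≤ M ∧ r M = r A) ⟨A, le_rfl, rfl⟩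
  obtain ⟨hAM, hrM⟩ := hMmax.prop
  have hqcl : qcl r A ≤ M := sSup_le fun x ⟨_, hr⟩ => by
    have hrMx : r (M ⊔ x) = r A :=
      le_antisymm (hrM ▸ hM.rank_sup_le_of_rank_sup_eq hAM hr) (hrM ▸ hM.rank_mono le_sup_left)
    exact sup_eq_left.mp (hMmax.eq_of_le ⟨hAM.trans le_sup_left, hrMx⟩ le_sup_left).symm
  exact le_antisymm (hrM ▸ hM.rank_mono hqcl) (hM.rank_mono (le_qcl r A))

theorem QMat.qflat_qcl (hM : QMat r) (A : Submodule K E) : QFlat r (qcl r A) := by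
  refine hM.qflat_iff.mpr fun x hx hr => le_sSup ⟨hx, le_antisymm ?_ (hM.rank_mono le_sup_left)⟩
  calc r (A ⊔ x) ≤ r (qcl r A ⊔ x) := hM.rank_mono (sup_le_sup_right (le_qcl r A) x)
    _ = r A := by rw [hr, hM.rank_qcl]

theorem QMat.qcyclic_qcl (hM : QMat r) {C : Submodule K E} (hC : QCyclic r C) :
    QCyclic r (qcl r C) := by
  intro B hB hd
  by_cases hCB : C ≤ B
  · exact le_antisymm (hM.rank_mono hB) (hM.rank_qcl C ▸ hM.rank_mono hCB)
  · exact hC.rank_eq_of_not_le hM hB (le_qcl r C) hd hCB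

theorem QCyclic.le_qcyc (hM : QMat r) {C A : Submodule K E} (hC : QCyclic r C) (hCA : C ≤ A) :
    C ≤ qcyc r A := by
  refine le_sSup_of_forall_span_singleton_mem fun a ha h0 => ?_
  have hx := finrank_span_singleton (K := K) h0
  have hxC : span K {a} ≤ C := (span_singleton_le_iff_mem a C).2 ha
  refine ⟨hxC.trans hCA, hx, fun B hB hd => ?_⟩
  by_cases hxB : span K {a} ≤ B
  · rw [sup_eq_left.mpr hxB]
  · rw [sup_eq_of_finrank_eq_add_one hB hd (hxC.trans hCA) hx hxB]
    exact (hC.rank_eq_of_not_le hM hB hCA hd fun h => hxB (hxC.trans h)).symm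

/-- Call the line `x` a non-coloop of `A` when every hyperplane of `A` avoiding `x` has rank
`r A`. This descends to a hyperplane `B₀ ∋ x` of `A` of smaller rank: a hyperplane `B` of
`B₀ = B ⊔ x` extends, by a line `y` outside `B₀`, to a hyperplane `B ⊔ y` of `A` avoiding `x`,
whence `r B₀ < r A = r (B ⊔ y) ≤ r B + 1`. -/
theorem QMat.rank_eq_of_hyperplane_of_rank_lt (hM : QMat r) {A B₀ x : Submodule K E}
    (hx : finrank K x = 1)
    (hcol : ∀ B ≤ A, finrank K A = finrank K B + 1 → ¬ x ≤ B → r B = r A)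
    (hB₀A : B₀ ≤ A) (hd₀ : finrank K A = finrank K B₀ + 1) (hlt : r B₀ < r A)
    (hxB₀ : x ≤ B₀) :
    ∀ B ≤ B₀, finrank K B₀ = finrank K B + 1 → ¬ x ≤ B → r B = r B₀ := by
  intro B hBB₀ hd hxB
  have hB₀ : B ⊔ x = B₀ := sup_eq_of_finrank_eq_add_one hBB₀ hd hxB₀ hx hxB
  obtain ⟨y, hy, hyA, hyB₀⟩ :=
    exists_line_le_not_le (hB₀A.lt_of_ne fun h => by rw [h] at hd₀; omega)
  have hdH := finrank_sup_eq_add_one_of_not_le hy fun h => hyB₀ (h.trans hBB₀)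
  have hxH : ¬ x ≤ B ⊔ y := fun hxH => by
    have hB₀H : B₀ = B ⊔ y :=
      eq_of_le_of_finrank_le (hB₀ ▸ sup_le le_sup_left hxH) (by omega)
    exact hyB₀ (hB₀H ▸ le_sup_right)
  have hrH : r (B ⊔ y) = r A := hcol _ (sup_le (hBB₀.trans hB₀A) hyA) (by omega) hxH
  linarith [hM.rank_sup_le_add_one B hy, hM.rank_mono hBB₀]

theorem QMat.exists_qcyclic_of_not_coloop (hM : QMat r) {x : Submodule K E}
    (hx : finrank K x = 1) (A : Submodule K E) (hxA : x ≤ A)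
    (hcol : ∀ B ≤ A, finrank K A = finrank K B + 1 → ¬ x ≤ B → r B = r A) :
    ∃ C ≤ A, QCyclic r C ∧ x ≤ C := by
  induction A using WellFoundedLT.induction with
  | ind A ih =>
    by_cases hA : QCyclic r A
    · exact ⟨A, le_rfl, hA, hxA⟩
    obtain ⟨B₀, hB₀A, hd₀, hne⟩ :
        ∃ B₀ ≤ A, finrank K A = finrank K B₀ + 1 ∧ r B₀ ≠ r A := by
      simpa [QCyclic] using hA
    have hxB₀ : x ≤ B₀ := not_not.mp fun h => hne (hcol B₀ hB₀A hd₀ h)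
    have hlt : r B₀ < r A := (hM.rank_mono hB₀A).lt_of_ne hne
    obtain ⟨C, hCB₀, hC, hxC⟩ := ih B₀ (hB₀A.lt_of_ne fun h => by rw [h] at hd₀; omega) hxB₀
      (hM.rank_eq_of_hyperplane_of_rank_lt hx hcol hB₀A hd₀ hlt hxB₀)
    exact ⟨C, hCB₀.trans hB₀A, hC, hxC⟩

/-- `qcyc r A` is the largest cyclic subspace of `A`: every non-coloop line of `A` lies in a
cyclic subspace of `A`. -/
theorem QMat.qcyclic_qcyc (hM : QMat r) (A : Submodule K E) : QCyclic r (qcyc r A) := by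
  have hbot : QCyclic r (⊥ : Submodule K E) := fun B _ hd => by simp at hd
  obtain ⟨C, hCmax⟩ :=
    exists_maximal_of_wellFoundedGT (fun C => C ≤ A ∧ QCyclic r C) ⟨⊥, bot_le, hbot⟩
  obtain ⟨hCA, hC⟩ := hCmax.prop
  suffices qcyc r A = C from this ▸ hC
  refine le_antisymm (sSup_le fun x ⟨hxA, hx, hxcyc⟩ => ?_) (hC.le_qcyc hM hCA)
  obtain ⟨C₀, hC₀A, hC₀, hxC₀⟩ := hM.exists_qcyclic_of_not_coloop hx A hxA fun B hB hd hxB => by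
    have hr := hxcyc B hB hd
    rwa [sup_eq_of_finrank_eq_add_one hB hd hxA hx hxB, eq_comm] at hr
  have hCC₀ := hCmax.eq_of_le ⟨sup_le hCA hC₀A, hC.sup hM hC₀⟩ le_sup_left
  exact hxC₀.trans (hCC₀ ▸ le_sup_right)

theorem QMat.qflat_qcyc (hM : QMat r) {F : Submodule K E} (hF : QFlat r F) :
    QFlat r (qcyc r F) := by
  refine hM.qflat_iff.mpr fun x hx hr => ?_
  have hxF : x ≤ F := (le_sSup ⟨hx, hr⟩ : x ≤ qcl r (qcyc r F)).trans
    (hM.qcl_le_of_qflat (qcyc_le r F) hF)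
  exact le_sup_right.trans (((hM.qcyclic_qcyc F).sup_line hM hx hr).le_qcyc hM
    (sup_le (qcyc_le r F) hxF))

end FiniteDimensional

/-- cyclic flats form a lattice under inclusion, with meet
`cyc(F₁ ∩ F₂)` and join `cl(F₁ + F₂)`. -/
theorem cyclic_flats_lattice (r : Submodule K E → ℤ) (hM : QMat r)
    (F₁ F₂ : Submodule K E)
    (h₁ : QFlat r F₁ ∧ QCyclic r F₁) (h₂ : QFlat r F₂ ∧ QCyclic r F₂) :
    (QFlat r (qcyc r (F₁ ⊓ F₂)) ∧ QCyclic r (qcyc r (F₁ ⊓ F₂))) ∧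
    (QFlat r (qcl r (F₁ ⊔ F₂)) ∧ QCyclic r (qcl r (F₁ ⊔ F₂))) ∧
    qcyc r (F₁ ⊓ F₂) ≤ F₁ ∧ qcyc r (F₁ ⊓ F₂) ≤ F₂ ∧
    (∀ G : Submodule K E, QFlat r G → QCyclic r G →
      G ≤ F₁ → G ≤ F₂ → G ≤ qcyc r (F₁ ⊓ F₂)) ∧
    F₁ ≤ qcl r (F₁ ⊔ F₂) ∧ F₂ ≤ qcl r (F₁ ⊔ F₂) ∧
    (∀ G : Submodule K E, QFlat r G → QCyclic r G →
      F₁ ≤ G → F₂ ≤ G → qcl r (F₁ ⊔ F₂) ≤ G) := by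
  obtain ⟨hF₁, hC₁⟩ := h₁
  obtain ⟨hF₂, hC₂⟩ := h₂
  have hmeet_le : qcyc r (F₁ ⊓ F₂) ≤ F₁ ⊓ F₂ := qcyc_le r _
  refine ⟨⟨hM.qflat_qcyc (hF₁.inf hM hF₂), hM.qcyclic_qcyc _⟩,
    ⟨hM.qflat_qcl _, hM.qcyclic_qcl (hC₁.sup hM hC₂)⟩,
    hmeet_le.trans inf_le_left, hmeet_le.trans inf_le_right,
    fun G _ hG hG₁ hG₂ => hG.le_qcyc hM (le_inf hG₁ hG₂),
    le_sup_left.trans (le_qcl r _), le_sup_right.trans (le_qcl r _),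
    fun G hG _ hG₁ hG₂ => hM.qcl_le_of_qflat (sup_le hG₁ hG₂) hG⟩
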